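/- If A ⊂_t B and A ⊂_t C, then A ⊂_t (B ∩ C), where ∩ is the Torra intersection. -/

import Mathlib

/-- Supremum (maximum) of a multiset of reals in `[0,1]`, defaulting to `0`. -/
noncomputable def msup (A : Multiset ℝ) : ℝ := A.toList.foldr max 0

/-- Infimum (minimum) of a multiset of reals in `[0,1]`, defaulting to `1`. -/
noncomputable def minf (A : Multiset ℝ) : ℝ := A.toList.foldr min 1

/-- Mean of a multiset of reals. -/
noncomputable def mmean (A : Multiset ℝ) : ℝ := A.sum / A.card

/-- The elements of a multiset sorted in descending order. -/
noncomputable def dsort (A : Multiset ℝ) : List ℝ := (A.sort (· ≤ ·)).reverse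

/-- `A ⊂ₛ B`: `|A| ≥ |B|` and the `i`-th largest element of `B` is at least the
`i`-th largest element of `A`, for `i ≤ |B|`. -/
noncomputable def subS (A B : Multiset ℝ) : Prop :=
  B.card ≤ A.card ∧ ∀ i < B.card, (dsort A).getD i 0 ≤ (dsort B).getD i 0

/-- `A ⊂ₜ B`: `|A| < |B|` and the `i`-th largest element of `B` is at least the
`i`-th largest element of `A`, for `i ≤ |A|`. -/
noncomputable def subT (A B : Multiset ℝ) : Prop :=
  A.card < B.card ∧ ∀ i < A.card, (dsort A).getD i 0 ≤ (dsort B).getD i 0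

/-- Torra intersection of two hesitant fuzzy elements (as multisets). -/
noncomputable def tInter (A B : Multiset ℝ) : Multiset ℝ :=
  (A + B).filter (fun h => h ≤ min (msup A) (msup B))

/-- Torra union of two hesitant fuzzy elements (as multisets). -/
noncomputable def tUnion (A B : Multiset ℝ) : Multiset ℝ :=
  (A + B).filter (fun h => max (minf A) (minf B) ≤ h)

/-!
Whichever of `B`, `C` has the smaller supremum lies entirely below `min (sup B) (sup C)`, so it
is a submultiset of `B ∩ C`. And `A ⊂ₜ ·` is monotone along submultisets: the descending sort of
a submultiset is a sublist of the descending sort, and a sublist of a descending list is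
dominated by it index by index.
-/

/- The `i`-th entry of `l` sits at some index `≥ i` of `l'`. -/
theorem List.Sublist.getElem_le_getElem_of_pairwise_ge {α : Type*} [Preorder α] {l l' : List α}
    (h : l.Sublist l') (hl' : l'.Pairwise (· ≥ ·)) {i : ℕ} (hi : i < l.length) :
    l[i] ≤ l'[i]'(hi.trans_le h.length_le) := by
  obtain ⟨f, hf⟩ := List.sublist_iff_exists_orderEmbedding_getElem?_eq.mp h
  have hfi := hf i
  rw [List.getElem?_eq_getElem hi, eq_comm, List.getElem?_eq_some_iff] at hfi
  obtain ⟨hfi_lt, hfi_eq⟩ := hfi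
  rw [← hfi_eq]
  exact hl'.rel_get_of_le (a := ⟨i, _⟩) (b := ⟨f i, hfi_lt⟩) (f.strictMono.id_le i)

theorem length_dsort (M : Multiset ℝ) : (dsort M).length = M.card := by
  simp [dsort]

theorem pairwise_dsort (M : Multiset ℝ) : (dsort M).Pairwise (· ≥ ·) :=
  List.pairwise_reverse.mpr (M.pairwise_sort (· ≤ ·))

theorem dsort_sublist_dsort {M N : Multiset ℝ} (h : M ≤ N) : (dsort M).Sublist (dsort N) := by
  refine List.Sublist.reverse (List.sublist_of_subperm_of_pairwise ?_
    (M.pairwise_sort _) (N.pairwise_sort _))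
  rwa [← Multiset.coe_le, Multiset.sort_eq, Multiset.sort_eq]

theorem getD_dsort_le_of_le {M N : Multiset ℝ} (h : M ≤ N) {i : ℕ} (hi : i < M.card) :
    (dsort M).getD i 0 ≤ (dsort N).getD i 0 := by
  have hiM : i < (dsort M).length := (length_dsort M).symm ▸ hi
  have hiN := hiM.trans_le (dsort_sublist_dsort h).length_le
  rw [List.getD_eq_getElem _ _ hiM, List.getD_eq_getElem _ _ hiN]
  exact (dsort_sublist_dsort h).getElem_le_getElem_of_pairwise_ge (pairwise_dsort N) hiM

theorem subT.mono_right {A M N : Multiset ℝ} (h : subT A M) (hMN : M ≤ N) : subT A N :=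
  ⟨h.1.trans_le (Multiset.card_le_card hMN),
    fun i hi => (h.2 i hi).trans (getD_dsort_le_of_le hMN (hi.trans h.1))⟩

theorem le_msup {A : Multiset ℝ} {x : ℝ} (hx : x ∈ A) : x ≤ msup A :=
  List.le_max_of_le' 0 (Multiset.mem_toList.mpr hx) le_rfl

theorem tInter_comm (B C : Multiset ℝ) : tInter B C = tInter C B := by
  simp only [tInter, add_comm B, min_comm (msup B)]

theorem le_tInter_of_msup_le {B C : Multiset ℝ} (h : msup B ≤ msup C) : B ≤ tInter B C := by
  have hB : B.filter (· ≤ min (msup B) (msup C)) = B :=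
    Multiset.filter_eq_self.mpr fun x hx => le_min (le_msup hx) ((le_msup hx).trans h)
  rw [tInter, Multiset.filter_add, hB]
  exact Multiset.le_add_right _ _

theorem stmt15_general (A B C : Multiset ℝ)
    (hab : subT A B) (hac : subT A C) :
    subT A (tInter B C) := by
  rcases le_total (msup B) (msup C) with h | h
  · exact hab.mono_right (le_tInter_of_msup_le h)
  · exact hac.mono_right (tInter_comm B C ▸ le_tInter_of_msup_le h)

theorem stmt15 (A B C : Multiset ℝ) (hA : A ≠ 0) (hB : B ≠ 0) (hC : C ≠ 0)
    (hA1 : ∀ x ∈ A, x ∈ Set.Icc (0:ℝ) 1) (hB1 : ∀ x ∈ B, x ∈ Set.Icc (0:ℝ) 1)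
    (hC1 : ∀ x ∈ C, x ∈ Set.Icc (0:ℝ) 1)
    (hab : subT A B) (hac : subT A C) :
    subT A (tInter B C) :=
  stmt15_general A B C hab hac
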